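/- Let X be a smooth manifold, (K_j) and (L_j) increasing sequences of compact subsets of X with K_j ⊆ interior(K_{j+1}) and L_j ⊆ interior(L_{j+1}) for all j ≥ 0, and set M = ⋃ K_j, N = ⋃ L_j. Suppose there is a sequence of diffeotopies φ_{j,t} : X → X (smooth isotopies of diffeomorphisms with φ_{j,0} = id) such that (1) φ_{j,1}(K_j) = L_j for all j ≥ 0, (2) L_{j-1} ⊆ φ_{j,1}(K_{j-1}) for all j ≥ 1, and (3) φ_{j+1,t}(x) = φ_{j,t}(x) for all x ∈ K_{j-1}, t ∈ [0,1], j ≥ 1. Then Φ_t(x) := lim_{j→∞} φ_{j,t}(x) is well defined on M (the sequence is eventually constant at each point), gives a smooth isotopy of smooth embeddings Φ_t : M → X with Φ_0 the inclusion, and Φ_1(M) = N. -/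

import Mathlib

open Set Manifold Filter Topology Function

/-!
Condition (3) makes `n ↦ φ n t x` constant from `n = j + 1` on for `x ∈ K j`, so the limit `Φ`
exists and agrees with the single diffeomorphism `φ (j + 2) t` on the open set `int K (j + 1)`.
Hence `Φ` is smooth on `[0,1] × M`, and `Φ t` is injective and open on the open set `M`,
i.e. an open embedding. Conditions (1) and (2) then give `Φ 1 (M) = N`.
-/

theorem monotone_of_subset_interior_succ {X : Type*} [TopologicalSpace X] {K : ℕ → Set X}
    (hK : ∀ j, K j ⊆ interior (K (j + 1))) : Monotone K :=
  monotone_nat_of_le_succ fun j => (hK j).trans interior_subset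

section StableLimit

variable {α β : Type*} {K : ℕ → Set α} {f : ℕ → α → β}

/-- The eventual value of `f n x` when `f (j + 2) = f (j + 1)` on `K j` for all `j`;
off `⋃ j, K j` it is the junk value `f 0 x`. -/
noncomputable def stableLimit (K : ℕ → Set α) (f : ℕ → α → β) (x : α) : β :=
  open Classical in
  if h : ∃ j, x ∈ K j then f (Nat.find h + 1) x else f 0 x

theorem eqOn_of_stabilizes (hK : Monotone K) (hf : ∀ j, EqOn (f (j + 2)) (f (j + 1)) (K j))
    {j m : ℕ} (hm : j + 1 ≤ m) : EqOn (f m) (f (j + 1)) (K j) := by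
  induction m, hm using Nat.le_induction with
  | base => exact fun _ _ => rfl
  | succ m hm ih =>
    obtain ⟨i, rfl⟩ : ∃ i, m = i + 1 := ⟨m - 1, by omega⟩
    exact fun x hx => (hf i (hK (by omega) hx)).trans (ih hx)

theorem stableLimit_eq (hK : Monotone K) (hf : ∀ j, EqOn (f (j + 2)) (f (j + 1)) (K j))
    {j : ℕ} {x : α} (hx : x ∈ K j) : stableLimit K f x = f (j + 1) x := by
  classical
  have hex : ∃ i, x ∈ K i := ⟨j, hx⟩
  rw [stableLimit, dif_pos hex]
  exact (eqOn_of_stabilizes hK hf (by simpa using Nat.find_min' hex hx) (Nat.find_spec hex)).symm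

theorem eventually_eq_stableLimit (hK : Monotone K)
    (hf : ∀ j, EqOn (f (j + 2)) (f (j + 1)) (K j)) {x : α} (hx : x ∈ ⋃ j, K j) :
    ∀ᶠ n in atTop, f n x = stableLimit K f x := by
  obtain ⟨j, hj⟩ := mem_iUnion.mp hx
  filter_upwards [eventually_ge_atTop (j + 1)] with n hn
  rw [eqOn_of_stabilizes hK hf hn hj, stableLimit_eq hK hf hj]

theorem injOn_stableLimit (hK : Monotone K) (hf : ∀ j, EqOn (f (j + 2)) (f (j + 1)) (K j))
    (hinj : ∀ n, Injective (f n)) : InjOn (stableLimit K f) (⋃ j, K j) := by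
  intro x hx y hy hxy
  obtain ⟨i, hi⟩ := mem_iUnion.mp hx
  obtain ⟨j, hj⟩ := mem_iUnion.mp hy
  rw [stableLimit_eq hK hf (hK (le_max_left i j) hi),
    stableLimit_eq hK hf (hK (le_max_right i j) hj)] at hxy
  exact hinj _ hxy

theorem image_stableLimit {L : ℕ → Set β} (hK : Monotone K)
    (hf : ∀ j, EqOn (f (j + 2)) (f (j + 1)) (K j)) (himage : ∀ j, f j '' K j = L j)
    (hcover : ∀ j, L j ⊆ f (j + 1) '' K j) :
    stableLimit K f '' ⋃ j, K j = ⋃ j, L j := by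
  apply Subset.antisymm
  · rintro _ ⟨x, hx, rfl⟩
    obtain ⟨j, hj⟩ := mem_iUnion.mp hx
    rw [stableLimit_eq hK hf hj]
    exact mem_iUnion_of_mem (j + 1) (himage (j + 1) ▸ mem_image_of_mem _ (hK j.le_succ hj))
  · intro y hy
    obtain ⟨j, hj⟩ := mem_iUnion.mp hy
    obtain ⟨x, hx, rfl⟩ := hcover j hj
    exact ⟨x, mem_iUnion_of_mem j hx, stableLimit_eq hK hf hx⟩

end StableLimit

theorem stableLimit_eventuallyEq {X β : Type*} [TopologicalSpace X] {K : ℕ → Set X}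
    {f : ℕ → X → β} (hK : ∀ j, K j ⊆ interior (K (j + 1)))
    (hf : ∀ j, EqOn (f (j + 2)) (f (j + 1)) (K j)) {j : ℕ} {x : X} (hx : x ∈ K j) :
    stableLimit K f =ᶠ[𝓝 x] f (j + 2) :=
  eventually_of_mem (isOpen_interior.mem_nhds (hK j hx)) fun _ hy =>
    stableLimit_eq (monotone_of_subset_interior_succ hK) hf (interior_subset hy)

section Topology

variable {X Y : Type*} [TopologicalSpace X] [TopologicalSpace Y] {K : ℕ → Set X}
  {f : ℕ → X → Y}

theorem continuousOn_stableLimit (hK : ∀ j, K j ⊆ interior (K (j + 1)))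
    (hf : ∀ j, EqOn (f (j + 2)) (f (j + 1)) (K j)) (hcont : ∀ n, Continuous (f n)) :
    ContinuousOn (stableLimit K f) (⋃ j, K j) := by
  intro x hx
  obtain ⟨j, hj⟩ := mem_iUnion.mp hx
  exact ((hcont (j + 2)).continuousAt.congr
    (stableLimit_eventuallyEq hK hf hj).symm).continuousWithinAt

theorem isOpen_image_inter_stableLimit (hK : ∀ j, K j ⊆ interior (K (j + 1)))
    (hf : ∀ j, EqOn (f (j + 2)) (f (j + 1)) (K j)) (hopen : ∀ n, IsOpenMap (f n))
    {U : Set X} (hU : IsOpen U) : IsOpen (stableLimit K f '' (U ∩ ⋃ j, K j)) := by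
  have hmono := monotone_of_subset_interior_succ hK
  suffices stableLimit K f '' (U ∩ ⋃ j, K j) =
      ⋃ j, f (j + 2) '' (U ∩ interior (K (j + 1))) by
    rw [this]
    exact isOpen_iUnion fun j => hopen _ _ (hU.inter isOpen_interior)
  apply Subset.antisymm
  · rintro _ ⟨x, ⟨hxU, hx⟩, rfl⟩
    obtain ⟨j, hj⟩ := mem_iUnion.mp hx
    exact mem_iUnion_of_mem j
      ⟨x, ⟨hxU, hK j hj⟩, (stableLimit_eq hmono hf (hmono j.le_succ hj)).symm⟩
  · rintro _ ⟨_, ⟨j, rfl⟩, x, ⟨hxU, hx⟩, rfl⟩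
    exact ⟨x, ⟨hxU, mem_iUnion_of_mem _ (interior_subset hx)⟩,
      stableLimit_eq hmono hf (interior_subset hx)⟩

theorem isOpenEmbedding_restrict_stableLimit (hK : ∀ j, K j ⊆ interior (K (j + 1)))
    (hf : ∀ j, EqOn (f (j + 2)) (f (j + 1)) (K j)) (hcont : ∀ n, Continuous (f n))
    (hinj : ∀ n, Injective (f n)) (hopen : ∀ n, IsOpenMap (f n)) :
    IsOpenEmbedding ((⋃ j, K j).domRestrict (stableLimit K f)) := by
  refine .of_continuous_injective_isOpenMap
    (continuousOn_stableLimit hK hf hcont).domRestrict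
    ((injOn_stableLimit (monotone_of_subset_interior_succ hK) hf hinj).injective) ?_
  rintro _ ⟨U, hU, rfl⟩
  rw [image_domRestrict]
  exact isOpen_image_inter_stableLimit hK hf hopen hU

end Topology

theorem contMDiffOn_stableLimit {𝕜 : Type*} [NontriviallyNormedField 𝕜]
    {EP HP P : Type*} [NormedAddCommGroup EP] [NormedSpace 𝕜 EP] [TopologicalSpace HP]
    {IP : ModelWithCorners 𝕜 EP HP} [TopologicalSpace P] [ChartedSpace HP P]
    {E H X : Type*} [NormedAddCommGroup E] [NormedSpace 𝕜 E] [TopologicalSpace H]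
    {I : ModelWithCorners 𝕜 E H} [TopologicalSpace X] [ChartedSpace H X]
    {E' H' Y : Type*} [NormedAddCommGroup E'] [NormedSpace 𝕜 E'] [TopologicalSpace H']
    {I' : ModelWithCorners 𝕜 E' H'} [TopologicalSpace Y] [ChartedSpace H' Y]
    {n : WithTop ℕ∞} {K : ℕ → Set X} {φ : ℕ → P → X → Y} {T : Set P}
    (hK : ∀ j, K j ⊆ interior (K (j + 1)))
    (hφ : ∀ i, ContMDiff (IP.prod I) I' n fun p : P × X => φ i p.1 p.2)
    (hstab : ∀ t ∈ T, ∀ j, EqOn (φ (j + 2) t) (φ (j + 1) t) (K j)) :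
    ContMDiffOn (IP.prod I) I' n (fun p : P × X => stableLimit K (φ · p.1) p.2)
      (T ×ˢ ⋃ j, K j) := by
  have hmono := monotone_of_subset_interior_succ hK
  rintro ⟨t, x⟩ ⟨ht, hx⟩
  obtain ⟨j, hj⟩ := mem_iUnion.mp hx
  have hnhds : T ×ˢ interior (K (j + 1)) ∈ 𝓝[T ×ˢ ⋃ j, K j] (t, x) :=
    mem_nhdsWithin.mpr ⟨univ ×ˢ interior (K (j + 1)), isOpen_univ.prod isOpen_interior,
      ⟨trivial, hK j hj⟩, fun q ⟨⟨_, hq⟩, hqT, _⟩ => ⟨hqT, hq⟩⟩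
  refine ((hφ (j + 2)).contMDiffAt.contMDiffWithinAt).congr_of_eventuallyEq ?_
    (stableLimit_eq hmono (hstab t ht) (hmono j.le_succ hj))
  filter_upwards [hnhds] with q ⟨hqT, hq⟩
  exact stableLimit_eq hmono (hstab q.1 hqT) (interior_subset hq)

theorem stmt1_general {E H' : Type*} [NormedAddCommGroup E] [NormedSpace ℝ E] [TopologicalSpace H']
    (I : ModelWithCorners ℝ E H') (X : Type*) [TopologicalSpace X] [ChartedSpace H' X]
    (K L : ℕ → Set X)
    (hKmono : ∀ j, K j ⊆ interior (K (j + 1)))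
    (φ : ℕ → ℝ → X → X)
    (hφsmooth : ∀ j, ContMDiff ((𝓘(ℝ, ℝ)).prod I) I (⊤ : ℕ∞) (fun p : ℝ × X => φ j p.1 p.2))
    (hφ0 : ∀ j, φ j 0 = id)
    (hφdiffeo : ∀ j t, ∃ g : X → X, ContMDiff I I (⊤ : ℕ∞) g ∧
      Function.LeftInverse g (φ j t) ∧ Function.RightInverse g (φ j t))
    (h1 : ∀ j, φ j 1 '' K j = L j)
    (h2 : ∀ j, L j ⊆ φ (j + 1) 1 '' K j)
    (h3 : ∀ j, ∀ x ∈ K j, ∀ t ∈ Icc (0 : ℝ) 1, φ (j + 2) t x = φ (j + 1) t x) :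
    ∃ Φ : ℝ → X → X,
      (∀ x ∈ ⋃ j, K j, ∀ t ∈ Icc (0 : ℝ) 1, ∀ᶠ j in Filter.atTop, φ j t x = Φ t x) ∧
      (∀ x ∈ ⋃ j, K j, Φ 0 x = x) ∧
      ContMDiffOn ((𝓘(ℝ, ℝ)).prod I) I (⊤ : ℕ∞) (fun p : ℝ × X => Φ p.1 p.2)
        ((Icc (0 : ℝ) 1) ×ˢ ⋃ j, K j) ∧
      (∀ t ∈ Icc (0 : ℝ) 1, Set.InjOn (Φ t) (⋃ j, K j)) ∧
      (∀ t ∈ Icc (0 : ℝ) 1,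
        Topology.IsEmbedding fun x : (⋃ j, K j : Set X) => Φ t (x : X)) ∧
      Φ 1 '' (⋃ j, K j) = ⋃ j, L j := by
  have hmono := monotone_of_subset_interior_succ hKmono
  have hstab : ∀ t ∈ Icc (0 : ℝ) 1, ∀ j, EqOn (φ (j + 2) t) (φ (j + 1) t) (K j) :=
    fun t ht j x hx => h3 j x hx t ht
  have hcont (i : ℕ) (t : ℝ) : Continuous (φ i t) :=
    (hφsmooth i).continuous.comp (Continuous.prodMk_right t)
  have hinj (i : ℕ) (t : ℝ) : Injective (φ i t) :=
    (hφdiffeo i t).choose_spec.2.1.injective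
  have hopen (i : ℕ) (t : ℝ) : IsOpenMap (φ i t) :=
    let ⟨_, hg, hleft, hright⟩ := hφdiffeo i t
    IsOpenMap.of_inverse hg.continuous hright hleft
  have h01 : (1 : ℝ) ∈ Icc (0 : ℝ) 1 := right_mem_Icc.mpr zero_le_one
  refine ⟨fun t => stableLimit K (φ · t), fun x hx t ht => eventually_eq_stableLimit hmono
    (hstab t ht) hx, fun x hx => ?_, contMDiffOn_stableLimit hKmono hφsmooth hstab,
    fun t ht => injOn_stableLimit hmono (hstab t ht) (hinj · t),
    fun t ht => (isOpenEmbedding_restrict_stableLimit hKmono (hstab t ht) (hcont · t)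
      (hinj · t) (hopen · t)).isEmbedding,
    image_stableLimit hmono (hstab 1 h01) h1 h2⟩
  obtain ⟨j, hj⟩ := mem_iUnion.mp hx
  exact (stableLimit_eq (f := (φ · 0)) hmono (hstab 0 (left_mem_Icc.mpr zero_le_one)) hj).trans
    (congrFun (hφ0 _) x)

/-- If `K_j`, `L_j` are increasing sequences of compact sets in a smooth manifold `X`
(with `K_j ⊆ int K_{j+1}`, `L_j ⊆ int L_{j+1}`) and `φ_{j,t}` is a sequence of diffeotopies
with `φ_{j,1}(K_j) = L_j`, `L_{j-1} ⊆ φ_{j,1}(K_{j-1})` and `φ_{j+1,t} = φ_{j,t}` on `K_{j-1}`,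
then `Φ_t = lim_j φ_{j,t}` is well defined (the sequence is eventually constant at each point
of `M = ⋃ K_j`), is a smooth isotopy of smooth embeddings of `M` into `X` with `Φ_0` the
inclusion, and `Φ_1(M) = N = ⋃ L_j`. -/
theorem stmt1 {E H' : Type*} [NormedAddCommGroup E] [NormedSpace ℝ E] [TopologicalSpace H']
    (I : ModelWithCorners ℝ E H') (X : Type*) [TopologicalSpace X] [ChartedSpace H' X]
    [IsManifold I (⊤ : ℕ∞) X]
    (K L : ℕ → Set X)
    (hKcpt : ∀ j, IsCompact (K j)) (hLcpt : ∀ j, IsCompact (L j))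
    (hKmono : ∀ j, K j ⊆ interior (K (j + 1)))
    (hLmono : ∀ j, L j ⊆ interior (L (j + 1)))
    (φ : ℕ → ℝ → X → X)
    (hφsmooth : ∀ j, ContMDiff ((𝓘(ℝ, ℝ)).prod I) I (⊤ : ℕ∞) (fun p : ℝ × X => φ j p.1 p.2))
    (hφ0 : ∀ j, φ j 0 = id)
    (hφdiffeo : ∀ j t, ∃ g : X → X, ContMDiff I I (⊤ : ℕ∞) g ∧
      Function.LeftInverse g (φ j t) ∧ Function.RightInverse g (φ j t))
    (h1 : ∀ j, φ j 1 '' K j = L j)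
    (h2 : ∀ j, L j ⊆ φ (j + 1) 1 '' K j)
    (h3 : ∀ j, ∀ x ∈ K j, ∀ t ∈ Icc (0 : ℝ) 1, φ (j + 2) t x = φ (j + 1) t x) :
    ∃ Φ : ℝ → X → X,
      (∀ x ∈ ⋃ j, K j, ∀ t ∈ Icc (0 : ℝ) 1, ∀ᶠ j in Filter.atTop, φ j t x = Φ t x) ∧
      (∀ x ∈ ⋃ j, K j, Φ 0 x = x) ∧
      ContMDiffOn ((𝓘(ℝ, ℝ)).prod I) I (⊤ : ℕ∞) (fun p : ℝ × X => Φ p.1 p.2)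
        ((Icc (0 : ℝ) 1) ×ˢ ⋃ j, K j) ∧
      (∀ t ∈ Icc (0 : ℝ) 1, Set.InjOn (Φ t) (⋃ j, K j)) ∧
      (∀ t ∈ Icc (0 : ℝ) 1,
        Topology.IsEmbedding fun x : (⋃ j, K j : Set X) => Φ t (x : X)) ∧
      Φ 1 '' (⋃ j, K j) = ⋃ j, L j :=
  stmt1_general I X K L hKmono φ hφsmooth hφ0 hφdiffeo h1 h2 h3
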